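/- arXiv:2205.04249 — 4 statements merged into one kernel-verified Lean document; each statement's English description precedes it below -/
import Mathlib

section
/- Let A = (a_0, a_1, ..., a_n) be a finite sequence of real numbers and let ℓ ∈ {1, ..., n-1}. Set A_1 = (a_0, ..., a_ℓ) and A_2 = (a_ℓ, ..., a_n). If a_ℓ ≠ 0, then V(A) = V(A_1) + V(A_2). -/
/-! Since `a ℓ ≠ 0` survives the passage to the subsequence of nonzero terms, the consecutive
pairs of that subsequence split at `a ℓ` into those of `A₁` and those of `A₂`. -/

open Classical in
/-- Number of sign variations in a finite sequence of reals: the number of pairs of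
consecutive terms in the subsequence of nonzero terms that have opposite signs. -/
noncomputable def signVar (l : List ℝ) : ℕ :=
  let nz := l.filter (fun x => decide (x ≠ 0))
  (nz.zip nz.tail).countP (fun p => decide (p.1 * p.2 < 0))

theorem List.consecutivePairs_append_cons {α : Type*} (u : List α) (x : α) (v : List α) :
    (u ++ x :: v).consecutivePairs
      = (u ++ [x]).consecutivePairs ++ (x :: v).consecutivePairs := by
  induction u with
  | nil => simp
  | cons a u ih =>
    cases u with
    | nil => simp [List.consecutivePairs]
    | cons b u => simpa [List.consecutivePairs] using ih

theorem List.map_range_add_succ {α : Type*} (f : ℕ → α) (k m : ℕ) :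
    (List.range (k + m + 1)).map f
      = (List.range k).map f ++ f k :: (List.range m).map (fun i => f (k + (i + 1))) := by
  rw [Nat.add_assoc, List.range_add, List.range_succ_eq_map]
  simp [Function.comp_def]

theorem signVar_append_cons_of_ne_zero (u : List ℝ) {x : ℝ} (v : List ℝ) (hx : x ≠ 0) :
    signVar (u ++ x :: v) = signVar (u ++ [x]) + signVar (x :: v) := by
  simp only [signVar, ne_eq, decide_not, List.filter_append, hx, decide_false, Bool.not_false,
    List.filter_cons_of_pos, List.filter_nil, List.tail_cons]
  exact (congrArg _ (List.consecutivePairs_append_cons _ _ _)).trans (List.countP_append ..)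

theorem sign_variation_split_at_nonzero_general (n ℓ : ℕ) (a : ℕ → ℝ)
    (h2 : ℓ < n) (hℓ : a ℓ ≠ 0) :
    signVar ((List.range (n + 1)).map a)
      = signVar ((List.range (ℓ + 1)).map a)
        + signVar ((List.range (n - ℓ + 1)).map (fun i => a (ℓ + i))) := by
  obtain ⟨m, rfl⟩ := Nat.exists_eq_add_of_le h2.le
  have hleft : (List.range (ℓ + 1)).map a = (List.range ℓ).map a ++ [a ℓ] := by
    simp [List.range_succ]
  have hright : (List.range (m + 1)).map (fun i => a (ℓ + i))
      = a ℓ :: (List.range m).map (fun i => a (ℓ + (i + 1))) := by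
    simp [List.range_succ_eq_map, Function.comp_def]
  rw [Nat.add_sub_cancel_left, List.map_range_add_succ, hleft, hright,
    signVar_append_cons_of_ne_zero _ _ hℓ]

theorem sign_variation_split_at_nonzero (n ℓ : ℕ) (a : ℕ → ℝ)
    (h1 : 1 ≤ ℓ) (h2 : ℓ < n) (hℓ : a ℓ ≠ 0) :
    signVar ((List.range (n + 1)).map a)
      = signVar ((List.range (ℓ + 1)).map a)
        + signVar ((List.range (n - ℓ + 1)).map (fun i => a (ℓ + i))) :=
  sign_variation_split_at_nonzero_general n ℓ a h2 hℓ
end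

section
/- (Descartes's rule of signs) Let f(x) be a polynomial with real coefficients of degree n with f(0) ≠ 0. Then there exists a nonnegative even integer ν such that Z_f(0, ∞) = V^{(n)}_f(0) - ν, where Z_f(0, ∞) is the number of positive real roots of f counted with multiplicity and V^{(n)}_f(0) is the number of sign variations in the coefficient sequence of f. -/
open Classical in
/-- Number of roots of `f` greater than `a`, counted with multiplicity. -/
noncomputable def Zgt (f : Polynomial ℝ) (a : ℝ) : ℕ :=
  (f.roots.filter (fun x => a < x)).card

/-!
Descartes' bound `Z ≤ V` is `Polynomial.roots_countP_pos_le_signVariations`, once `signVar`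
of the coefficient list is identified with `Polynomial.signVariations` (which reads the coefficients
from the top and keeps only their signs). It remains to see that `Z` and `V` have the same parity:
both are even exactly when `f(0)` and the leading coefficient have the same sign. For `V` this holds
because each sign variation flips the sign along the coefficient sequence; for `Z` because splitting
off a factor `X - η` with `η > 0` flips the sign of `f(0)`, while without positive roots `f` keeps
the sign of `f(0)` on `[0, ∞)` by the intermediate value theorem.
-/

namespace List

variable {α : Type*}

theorem zip_tail_eq_zip_dropLast_tail (l : List α) : l.zip l.tail = l.dropLast.zip l.tail := by
  rw [zip_eq_zip_take_min, zip_eq_zip_take_min (l₁ := l.dropLast), dropLast_eq_take]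
  simp [take_take]

theorem countP_zip_tail_reverse {p : α → α → Bool} (hp : ∀ a b, p a b = p b a)
    (l : List α) :
    (l.reverse.zip l.reverse.tail).countP (fun q => p q.1 q.2) =
      (l.zip l.tail).countP (fun q => p q.1 q.2) := by
  have hswap : (fun q : α × α => p q.1 q.2) ∘ Prod.swap = fun q => p q.1 q.2 :=
    funext fun q => hp q.2 q.1
  have hlen : l.dropLast.length = l.tail.length := by simp
  rw [zip_tail_eq_zip_dropLast_tail, dropLast_reverse, tail_reverse, ← zip_swap, countP_map,
    hswap, zip_tail_eq_zip_dropLast_tail l, zip_eq_zipWith, zip_eq_zipWith,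
    ← reverse_zipWith hlen, countP_reverse]

theorem length_destutter_ne_sub_one [DecidableEq α] (l : List α) :
    (l.destutter (· ≠ ·)).length - 1 = (l.zip l.tail).countP (fun q => q.1 ≠ q.2) := by
  cases l with
  | nil => rfl
  | cons a t =>
    rw [destutter_cons']
    induction t generalizing a with
    | nil => simp
    | cons b t ih =>
      rw [destutter'_cons]
      by_cases hab : a = b
      · subst hab
        simp [ih]
      · have hpos := length_pos_of_ne_nil (destutter'_ne_nil (R := (· ≠ ·)) (l := t) (a := b))
        rw [if_pos hab, length_cons, Nat.add_sub_cancel, tail_cons, zip_cons_cons,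
          countP_cons_of_pos (by simpa using hab)]
        have := ih b
        rw [tail_cons] at this
        omega

end List

open Polynomial

section SignType

variable {R : Type*} [Ring R] [LinearOrder R] [IsStrictOrderedRing R] {x y : R}

theorem sign_ne_sign_iff_mul_neg (hx : x ≠ 0) (hy : y ≠ 0) :
    SignType.sign x ≠ SignType.sign y ↔ x * y < 0 := by
  rcases hx.lt_or_gt with hx | hx <;> rcases hy.lt_or_gt with hy | hy <;>
    simp [hx, hy, hx.not_gt, hy.not_gt, mul_neg_iff]

theorem sign_eq_neg_sign_iff_mul_neg (hx : x ≠ 0) (hy : y ≠ 0) :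
    SignType.sign x = -SignType.sign y ↔ x * y < 0 := by
  rcases hx.lt_or_gt with hx | hx <;> rcases hy.lt_or_gt with hy | hy <;>
    simp [hx, hy, hx.not_gt, hy.not_gt, mul_neg_iff]

end SignType

theorem signVar_reverse (l : List ℝ) : signVar l.reverse = signVar l := by
  simp only [signVar, List.filter_reverse]
  exact List.countP_zip_tail_reverse (p := fun a b => decide (a * b < 0))
    (fun a b => by rw [mul_comm]) _

theorem signVar_eq_length_destutter (l : List ℝ) :
    signVar l = (((l.map SignType.sign).filter (· ≠ 0)).destutter (· ≠ ·)).length - 1 := by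
  have hsign : (fun x : ℝ => decide (SignType.sign x ≠ 0)) = fun x => decide (x ≠ 0) := by
    simp
  rw [List.length_destutter_ne_sub_one, List.filter_map, Function.comp_def, hsign,
    ← List.map_tail, List.zip_map, List.countP_map, signVar]
  refine List.countP_congr fun q hq => ?_
  have hq₁ := List.of_mem_filter (List.of_mem_zip hq).1
  have hq₂ := List.of_mem_filter (List.tail_subset _ (List.of_mem_zip hq).2)
  simp only [decide_eq_true_eq] at hq₁ hq₂
  simpa using (sign_ne_sign_iff_mul_neg hq₁ hq₂).symm

namespace Polynomial

theorem signVariations_eq_signVar (P : ℝ[X]) :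
    P.signVariations = signVar ((List.range (P.natDegree + 1)).map P.coeff) := by
  rcases eq_or_ne P 0 with rfl | hP
  · simp [signVar]
  · have hcoeffs : P.coeffList = ((List.range (P.natDegree + 1)).map P.coeff).reverse := by
      rw [coeffList, degree_eq_natDegree hP, List.map_reverse]
      rfl
    rw [← signVar_reverse, signVar_eq_length_destutter, ← hcoeffs, signVariations]

theorem even_signVariations_iff {R : Type*} [CommRing R] [LinearOrder R] [IsStrictOrderedRing R]
    {P : R[X]} (h : P.coeff 0 ≠ 0) :
    Even P.signVariations ↔ 0 < P.leadingCoeff * P.coeff 0 := by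
  induction hn : P.natDegree using Nat.strong_induction_on generalizing P with
  | _ n ih =>
    rcases Nat.eq_zero_or_pos n with rfl | hn_pos
    · rw [eq_C_of_natDegree_eq_zero hn, ← monomial_zero_left, signVariations_monomial,
        monomial_zero_left, leadingCoeff_C, coeff_C_zero]
      simpa using mul_self_pos.2 h
    · have hP : P ≠ 0 := fun hP => h (by simp [hP])
      have hE0 : P.eraseLead.coeff 0 = P.coeff 0 := eraseLead_coeff_of_ne 0 (by omega)
      have hE : P.eraseLead ≠ 0 := fun hE => h (by rw [← hE0, hE, coeff_zero])
      have hdeg : P.eraseLead.natDegree < n :=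
        hn ▸ (eraseLead_natDegree_lt_or_eraseLead_eq_zero P).resolve_right hE
      have ihE := ih _ hdeg (hE0 ▸ h) rfl
      rw [hE0] at ihE
      have ha := leadingCoeff_ne_zero.2 hP
      have hb := leadingCoeff_ne_zero.2 hE
      rw [signVariations_eq_eraseLead_add_ite hP]
      split_ifs with hflip
      · rw [sign_eq_neg_sign_iff_mul_neg ha hb] at hflip
        rw [Nat.even_add_one, ihE, not_lt]
        have hc := mul_self_pos.2 h
        constructor <;> intro h₁
        · have h₂ := h₁.lt_of_ne (mul_ne_zero hb h)
          nlinarith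
        · nlinarith
      · rw [sign_eq_neg_sign_iff_mul_neg ha hb, not_lt] at hflip
        rw [add_zero, ihE]
        have hab := hflip.lt_of_ne' (mul_ne_zero ha hb)
        have hc := mul_self_pos.2 h
        constructor <;> intro h₁ <;> nlinarith

theorem leadingCoeff_mul_eval_zero_pos {P : ℝ[X]} (h0 : P.eval 0 ≠ 0)
    (hroots : ∀ x ∈ P.roots, x ≤ 0) : 0 < P.leadingCoeff * P.eval 0 := by
  have hP : P ≠ 0 := fun hP => h0 (by simp [hP])
  have hlc := leadingCoeff_ne_zero.2 hP
  rcases Nat.eq_zero_or_pos P.natDegree with hdeg | hdeg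
  · rw [leadingCoeff, hdeg, coeff_zero_eq_eval_zero]
    exact mul_self_pos.2 h0
  -- multiplying by the leading coefficient makes `Q` tend to `+∞` without changing its roots
  set Q := C P.leadingCoeff * P
  have hQ : Filter.Tendsto (fun x => Q.eval x) Filter.atTop Filter.atTop := by
    refine tendsto_atTop_of_leadingCoeff_nonneg Q ?_ ?_
    · rw [degree_C_mul hlc]; exact natDegree_pos_iff_degree_pos.1 hdeg
    · rw [leadingCoeff_mul, leadingCoeff_C]; exact (mul_self_pos.2 hlc).le
  by_contra hneg
  have hQ0 : Q.eval 0 < 0 := by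
    rw [eval_mul, eval_C]; exact (not_lt.1 hneg).lt_of_ne (mul_ne_zero hlc h0)
  obtain ⟨M, hM, hM0⟩ := ((hQ.eventually_gt_atTop 0).and (Filter.eventually_gt_atTop 0)).exists
  obtain ⟨x, hx, hQx⟩ := intermediate_value_Ioo hM0.le Q.continuous.continuousOn ⟨hQ0, hM⟩
  have hPx : P.IsRoot x := by simpa [Q, hlc] using hQx
  exact (hroots x ((mem_roots hP).2 hPx)).not_gt hx.1

theorem even_roots_countP_pos_iff {P : ℝ[X]} (h0 : P.eval 0 ≠ 0) :
    Even (P.roots.countP (0 < ·)) ↔ 0 < P.leadingCoeff * P.eval 0 := by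
  induction hk : P.roots.countP (0 < ·) generalizing P with
  | zero =>
    simp only [Even.zero, true_iff]
    refine leadingCoeff_mul_eval_zero_pos h0 fun x hx => not_lt.1 ?_
    exact Multiset.countP_eq_zero.1 hk x hx
  | succ k ih =>
    have hP : P ≠ 0 := fun hP => h0 (by simp [hP])
    obtain ⟨η, hη, hη_pos⟩ := Multiset.countP_pos.1 (hk.trans_gt k.succ_pos)
    obtain ⟨Q, rfl⟩ := dvd_iff_isRoot.2 (isRoot_of_mem_roots hη)
    have hQ : Q ≠ 0 := right_ne_zero_of_mul hP
    have hQ0 : Q.eval 0 ≠ 0 := right_ne_zero_of_mul (by simpa using h0)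
    have hQk : Q.roots.countP (0 < ·) = k := by
      simpa [roots_mul hP, hη_pos] using hk
    rw [Nat.even_add_one, ih hQ0 hQk, leadingCoeff_mul, leadingCoeff_X_sub_C, one_mul, eval_mul,
      eval_sub, eval_X, eval_C, not_lt]
    have hq := mul_ne_zero (leadingCoeff_ne_zero.2 hQ) hQ0
    constructor <;> intro h₁
    · nlinarith [h₁.lt_of_ne hq]
    · nlinarith

end Polynomial

theorem descartes_rule_of_signs (n : ℕ) (f : Polynomial ℝ)
    (hdeg : f.natDegree = n) (h0 : f.eval 0 ≠ 0) :
    ∃ ν : ℕ, Even ν ∧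
      (Zgt f 0 : ℤ) = (signVar ((List.range (n + 1)).map f.coeff) : ℤ) - ν := by
  subst hdeg
  have hZ : Zgt f 0 = f.roots.countP (0 < ·) := (Multiset.countP_eq_card_filter _ _).symm
  rw [← signVariations_eq_signVar, hZ]
  have hle := roots_countP_pos_le_signVariations f
  have hparity : Even f.signVariations ↔ Even (f.roots.countP (0 < ·)) := by
    rw [even_signVariations_iff (by rwa [coeff_zero_eq_eval_zero]), even_roots_countP_pos_iff h0,
      coeff_zero_eq_eval_zero]
  exact ⟨_, (Nat.even_sub hle).2 hparity, by rw [Nat.cast_sub hle]; ring⟩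
end

section
/- Let f(x) be a polynomial with real coefficients of degree n with f(0) ≠ 0. If the number of sign variations V^{(n)}_f(0) in the coefficient sequence of f equals 1, then f has exactly one positive real root λ, and λ is a simple root. -/
namespace List

variable {α : Type*} [DecidableEq α]

theorem eq_replicate_of_countP_zip_ne_eq_zero {a : α} {l : List α}
    (h : ((a :: l).zip l).countP (fun p => p.1 ≠ p.2) = 0) : l = replicate l.length a := by
  induction l generalizing a with
  | nil => rfl
  | cons b t ih =>
    rw [zip_cons_cons, countP_cons] at h
    obtain ⟨ht, hab⟩ := Nat.add_eq_zero_iff.1 h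
    obtain rfl : a = b := by simpa using hab
    rw [length_cons, replicate_succ, ← ih ht]

theorem exists_eq_replicate_append_replicate_of_countP_zip_tail_ne_eq_one :
    ∀ {l : List α}, (l.zip l.tail).countP (fun p => p.1 ≠ p.2) = 1 →
      ∃ a b m k, a ≠ b ∧ l = replicate (m + 1) a ++ replicate (k + 1) b
  | [], h | [_], h => by simp at h
  | a :: b :: t, h => by
    rw [tail_cons, zip_cons_cons, countP_cons] at h
    by_cases hab : a = b
    · subst hab
      obtain ⟨a', c, m, k, hac, heq⟩ :=
        exists_eq_replicate_append_replicate_of_countP_zip_tail_ne_eq_one (l := a :: t)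
          (by simpa using h)
      obtain rfl : a = a' := by simpa [replicate_succ] using congrArg head? heq
      exact ⟨a, c, m + 1, k, hac, by rw [heq]; rfl⟩
    · have ht := eq_replicate_of_countP_zip_ne_eq_zero (a := b) (l := t) (by simpa [hab] using h)
      exact ⟨a, b, 0, t.length, hab, by rw [ht]; simp [replicate_succ]⟩

theorem destutter'_ne_replicate_append (a : α) (m : ℕ) (l : List α) :
    (replicate m a ++ l).destutter' (· ≠ ·) a = l.destutter' (· ≠ ·) a := by
  induction m with
  | zero => rfl
  | succ m ih => rw [replicate_succ, cons_append, destutter'_cons_neg _ (not_not.2 rfl), ih]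

theorem destutter_ne_replicate_append_replicate {a b : α} (hab : a ≠ b) (m k : ℕ) :
    (replicate (m + 1) a ++ replicate (k + 1) b).destutter (· ≠ ·) = [a, b] := by
  rw [replicate_succ, cons_append, destutter_cons', destutter'_ne_replicate_append,
    replicate_succ, destutter'_cons_pos _ hab, ← append_nil (replicate k b),
    destutter'_ne_replicate_append, destutter'_nil]

end List

open Polynomial List

theorem mul_neg_iff_sign_ne {R : Type*} [Ring R] [LinearOrder R] [IsStrictOrderedRing R]
    {x y : R} (hx : x ≠ 0) (hy : y ≠ 0) :
    x * y < 0 ↔ SignType.sign x ≠ SignType.sign y := by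
  rcases hx.lt_or_gt with hx | hx <;> rcases hy.lt_or_gt with hy | hy <;>
    simp [hx, hy, mul_neg_iff, hx.not_gt, hy.not_gt]

noncomputable def nonzeroSigns (l : List ℝ) : List SignType :=
  (l.map SignType.sign).filter (· ≠ 0)

theorem nonzeroSigns_eq_map_filter (l : List ℝ) :
    nonzeroSigns l = (l.filter (· ≠ 0)).map SignType.sign := by
  simp [nonzeroSigns, filter_map, Function.comp_def]

theorem nonzeroSigns_reverse (l : List ℝ) :
    nonzeroSigns l.reverse = (nonzeroSigns l).reverse := by
  rw [nonzeroSigns, map_reverse, filter_reverse, nonzeroSigns]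

theorem signVar_eq_countP_nonzeroSigns (l : List ℝ) :
    signVar l = ((nonzeroSigns l).zip (nonzeroSigns l).tail).countP (fun p => p.1 ≠ p.2) := by
  rw [signVar, nonzeroSigns_eq_map_filter, ← map_tail, zip_map, countP_map]
  refine countP_congr fun p hp => ?_
  have hne : ∀ x ∈ l.filter (· ≠ 0), x ≠ 0 := fun x hx => by
    simpa using (mem_filter.1 hx).2
  simpa using mul_neg_iff_sign_ne (hne _ (of_mem_zip hp).1)
    (hne _ (mem_of_mem_tail (of_mem_zip hp).2))

namespace Polynomial

theorem coeffList_eq_reverse_map_range {R : Type*} [Semiring R] {p : R[X]} (hp : p ≠ 0) :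
    p.coeffList = ((range (p.natDegree + 1)).map p.coeff).reverse := by
  rw [coeffList, withBotSucc_degree_eq_natDegree_add_one hp, map_reverse]

section SignPattern

variable {p : ℝ[X]} {a b : SignType} {m k : ℕ}

theorem signVariations_eq_one_of_nonzeroSigns_eq (hp : p ≠ 0) (hab : a ≠ b)
    (h : nonzeroSigns ((range (p.natDegree + 1)).map p.coeff) =
      replicate (m + 1) a ++ replicate (k + 1) b) :
    p.signVariations = 1 := by
  change ((nonzeroSigns p.coeffList).destutter (· ≠ ·)).length - 1 = 1
  rw [coeffList_eq_reverse_map_range hp, nonzeroSigns_reverse, h, reverse_append,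
    reverse_replicate, reverse_replicate, destutter_ne_replicate_append_replicate hab.symm]
  rfl

theorem eval_zero_mul_leadingCoeff_neg_of_nonzeroSigns_eq (h0 : p.coeff 0 ≠ 0) (hab : a ≠ b)
    (h : nonzeroSigns ((range (p.natDegree + 1)).map p.coeff) =
      replicate (m + 1) a ++ replicate (k + 1) b) :
    p.eval 0 * p.leadingCoeff < 0 := by
  have hlc : p.leadingCoeff ≠ 0 := leadingCoeff_ne_zero.2 fun hp => h0 (by simp [hp])
  have hhead : SignType.sign (p.coeff 0) = a := by
    simpa [range_succ_eq_map, nonzeroSigns, h0, replicate_succ] using congrArg head? h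
  have hlast : SignType.sign p.leadingCoeff = b := by
    simpa [range_succ, nonzeroSigns, hlc, getLast?_append, getLast?_replicate] using
      congrArg getLast? h
  rw [← coeff_zero_eq_eval_zero, mul_neg_iff_sign_ne h0 hlc, hhead, hlast]
  exact hab

end SignPattern

theorem exists_pos_isRoot_of_eval_zero_mul_leadingCoeff_neg {p : ℝ[X]}
    (h : p.eval 0 * p.leadingCoeff < 0) : ∃ x, 0 < x ∧ p.IsRoot x := by
  have hlc : p.leadingCoeff ≠ 0 := by rintro hlc; simp [hlc] at h
  set q := C p.leadingCoeff * p
  have hq0 : q.eval 0 < 0 := by simpa [q, mul_comm] using h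
  have hqlc : 0 < q.leadingCoeff := by simpa [q] using mul_self_pos.2 hlc
  have hqdeg : 0 < q.degree := by
    refine natDegree_pos_iff_degree_pos.1 (Nat.pos_of_ne_zero fun hq => ?_)
    rw [leadingCoeff, hq, coeff_zero_eq_eval_zero] at hqlc
    exact hq0.not_gt hqlc
  have hq_atTop := tendsto_atTop_of_leadingCoeff_nonneg q hqdeg hqlc.le
  obtain ⟨M, hqM, hM⟩ :=
    ((hq_atTop.eventually_gt_atTop 0).and (Filter.eventually_gt_atTop 0)).exists
  obtain ⟨x, hx, hqx⟩ := intermediate_value_Ioo hM.le q.continuous.continuousOn ⟨hq0, hqM⟩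
  exact ⟨x, hx.1, by simpa [q, hlc] using hqx⟩

section RuleOfSigns

variable {R : Type*} [CommRing R] [LinearOrder R] [IsStrictOrderedRing R] {p : R[X]} {x y : R}

theorem rootMultiplicity_le_signVariations (hx : 0 < x) :
    p.rootMultiplicity x ≤ p.signVariations := by
  classical
  calc p.rootMultiplicity x = (p.roots.filter (0 < ·)).count x := by
        rw [Multiset.count_filter_of_pos hx, count_roots]
    _ ≤ p.roots.countP (0 < ·) := by
        rw [Multiset.countP_eq_card_filter]; exact Multiset.count_le_card _ _
    _ ≤ p.signVariations := roots_countP_pos_le_signVariations p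

theorem eq_of_isRoot_of_signVariations_le_one (hp : p ≠ 0) (h : p.signVariations ≤ 1)
    (hx : 0 < x) (hy : 0 < y) (hpx : p.IsRoot x) (hpy : p.IsRoot y) : x = y := by
  by_contra hxy
  have hle : ({x, y} : Multiset R) ≤ p.roots :=
    (Multiset.le_iff_subset (by simpa using hxy)).2
      (by simp [Multiset.insert_eq_cons, hp, hpx.eq_zero, hpy.eq_zero])
  have := (Multiset.countP_le_of_le (0 < ·) hle).trans (roots_countP_pos_le_signVariations p)
  simp [Multiset.insert_eq_cons, ← Multiset.cons_zero, hx, hy] at this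
  omega

end RuleOfSigns

end Polynomial

theorem descartes_one_sign_variation (n : ℕ) (f : Polynomial ℝ)
    (hdeg : f.natDegree = n) (h0 : f.eval 0 ≠ 0)
    (hV : signVar ((List.range (n + 1)).map f.coeff) = 1) :
    ∃ l : ℝ, 0 < l ∧ f.eval l = 0 ∧ Polynomial.rootMultiplicity l f = 1 ∧
      ∀ x : ℝ, 0 < x → f.eval x = 0 → x = l := by
  subst hdeg
  have h00 : f.coeff 0 ≠ 0 := by rwa [coeff_zero_eq_eval_zero]
  have hf : f ≠ 0 := fun hf => h00 (by simp [hf])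
  rw [signVar_eq_countP_nonzeroSigns] at hV
  obtain ⟨a, b, m, k, hab, hsigns⟩ :=
    exists_eq_replicate_append_replicate_of_countP_zip_tail_ne_eq_one hV
  have hsv : f.signVariations = 1 := signVariations_eq_one_of_nonzeroSigns_eq hf hab hsigns
  obtain ⟨l, hl, hfl⟩ := exists_pos_isRoot_of_eval_zero_mul_leadingCoeff_neg
    (eval_zero_mul_leadingCoeff_neg_of_nonzeroSigns_eq h00 hab hsigns)
  refine ⟨l, hl, hfl, ?_, fun x hx hfx => ?_⟩
  · exact le_antisymm (hsv ▸ rootMultiplicity_le_signVariations hl)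
      ((rootMultiplicity_pos hf).2 hfl)
  · exact eq_of_isRoot_of_signVariations_le_one hf hsv.le hx hl hfx hfl
end

section
/- (Gauss's lemma for Descartes's rule) Let h(x) be a nonzero polynomial with real coefficients of degree m with h(0) ≠ 0, let λ > 0 be a real number, and let ℓ(x) = (x - λ) · h(x). Then there exists a nonnegative even integer ν such that V^{(m+1)}_ℓ(0) = V^{(m)}_h(0) + 1 + ν, where V^{(m)}_h(0) and V^{(m+1)}_ℓ(0) denote the numbers of sign variations in the coefficient sequences of h and ℓ, respectively. -/
/-!
Write `b k` and `c k` for the coefficients of `h` and of `ℓ = (X - λ) h`. The weighted partial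
sums of `c` recover `b`: `∑_{k ≤ q} λ^k c k = -λ^(q+1) b q`. Hence if `b p ≠ 0` and `b q` is zero
or of the opposite sign, for some `p < q`, then some `c j` with `p < j ≤ q` has the sign of `b p`,
and some `c j` with `j ≤ p` has the opposite sign. Starting from an alternating subsequence of
`b` of length `V(h) + 1`, and using `b (deg h + 1) = 0`, this produces an alternating subsequence
of `c` of length `V(h) + 2`, so `V(ℓ) ≥ V(h) + 1`.

The parity of a number of sign variations only depends on the signs of the first and last nonzero
terms; since `c 0 = -λ b 0` and `ℓ` and `h` have the same leading coefficient, `V(ℓ)` and `V(h)`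
have opposite parities.
-/

open List Polynomial

namespace List

theorem sublist_range_iff {l : List ℕ} {n : ℕ} :
    l <+ range n ↔ l.Pairwise (· < ·) ∧ ∀ i ∈ l, i < n :=
  ⟨fun h => ⟨pairwise_lt_range.sublist h, fun _ hi => mem_range.1 (h.subset hi)⟩,
    fun ⟨hl, hn⟩ => sublist_of_subperm_of_pairwise
      (subperm_of_subset hl.nodup fun i hi => mem_range.2 (hn i hi)) hl pairwise_lt_range⟩

section Changes

variable {α : Type*} [DecidableEq α]

def changes (u : List α) : ℕ := (u.zip u.tail).countP fun p => p.1 ≠ p.2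

theorem changes_cons_cons (a b : α) (u : List α) :
    changes (a :: b :: u) = changes (b :: u) + if a ≠ b then 1 else 0 := by
  simp [changes, countP_cons]

theorem length_destutter_ne_cons (a : α) (u : List α) :
    ((a :: u).destutter (· ≠ ·)).length = changes (a :: u) + 1 := by
  induction u generalizing a with
  | nil => simp [changes]
  | cons b u ih =>
    rw [destutter_cons_cons, changes_cons_cons, ← destutter_cons', add_right_comm, ← ih b]
    by_cases hab : a = b
    · subst hab; simp [destutter_cons']
    · simp [hab]

theorem length_destutter_ne {u : List α} (hu : u ≠ []) :
    (u.destutter (· ≠ ·)).length = changes u + 1 := by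
  obtain ⟨a, u, rfl⟩ := exists_cons_of_ne_nil hu
  exact length_destutter_ne_cons a u

end Changes

theorem even_changes_iff_head?_eq_getLast? (u : List Bool) :
    Even (changes u) ↔ u.head? = u.getLast? := by
  induction u with
  | nil => simp [changes]
  | cons a u ih =>
    cases u with
    | nil => simp [changes]
    | cons b u =>
      rw [changes_cons_cons, getLast?_cons_cons, getLast?_eq_some_getLast (cons_ne_nil b u)] at *
      simp only [head?_cons] at ih ⊢
      generalize (b :: u).getLast _ = c at ih
      cases a <;> cases b <;> cases c <;> simp [Nat.even_add_one, ih]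

theorem IsChain.ne_zero_of_mul_neg {R : Type*} [Semiring R] [PartialOrder R] {a b : R}
    {t : List R} (h : (a :: b :: t).IsChain (fun x y => x * y < 0)) :
    ∀ x ∈ a :: b :: t, x ≠ 0 := by
  induction t generalizing a b with
  | nil =>
    have hab := isChain_pair.1 h
    simp [left_ne_zero_of_mul hab.ne, right_ne_zero_of_mul hab.ne]
  | cons c t ih =>
    rw [isChain_cons_cons] at h
    intro x hx
    rcases mem_cons.1 hx with rfl | hx
    · exact left_ne_zero_of_mul h.1.ne
    · exact ih h.2 x hx

end List

theorem mul_neg_iff_of_ne_zero {R : Type*} [Ring R] [LinearOrder R] [IsStrictOrderedRing R]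
    {x y : R} (hx : x ≠ 0) (hy : y ≠ 0) : x * y < 0 ↔ ¬(0 < x ↔ 0 < y) := by
  rcases hx.lt_or_gt with hx | hx <;> rcases hy.lt_or_gt with hy | hy <;>
    simp [mul_neg_iff, hx, hy, hx.not_gt, hy.not_gt]

/-- Encoding the nonzero terms by their signs turns sign-alternating sublists into `≠`-chains,
so that `List.destutter (· ≠ ·)` produces one of maximal length. -/
noncomputable def signPattern (l : List ℝ) : List Bool := (l.filter (· ≠ 0)).map (0 < ·)

theorem signVar_eq_changes_signPattern (l : List ℝ) : signVar l = (signPattern l).changes := by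
  simp only [signVar, signPattern, changes, ← map_tail, zip_map, countP_map]
  refine countP_congr fun p hp => ?_
  have hne : ∀ x ∈ l.filter (· ≠ 0), x ≠ 0 := fun x hx => by simpa using (mem_filter.1 hx).2
  have h1 := hne _ (of_mem_zip hp).1
  have h2 := hne _ (mem_of_mem_tail (of_mem_zip hp).2)
  simp [mul_neg_iff_of_ne_zero h1 h2]

theorem length_destutter_signPattern {l : List ℝ} (hl : signPattern l ≠ []) :
    ((signPattern l).destutter (· ≠ ·)).length = signVar l + 1 := by
  rw [length_destutter_ne hl, signVar_eq_changes_signPattern]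

theorem isChain_mul_neg_iff {t : List ℝ} (ht : ∀ x ∈ t, x ≠ 0) :
    t.IsChain (fun x y => x * y < 0) ↔ (t.map fun x => decide (0 < x)).IsChain (· ≠ ·) := by
  rw [isChain_map]
  refine IsChain.iff_of_mem_imp fun x y hx hy => ?_
  simp [mul_neg_iff_of_ne_zero (ht x hx) (ht y hy)]

theorem length_le_signVar_add_one {t l : List ℝ} (htl : t <+ l)
    (ht : t.IsChain (fun x y => x * y < 0)) : t.length ≤ signVar l + 1 := by
  match t, htl, ht with
  | [], _, _ => simp
  | [_], _, _ => simp
  | a :: b :: t, htl, ht =>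
    have hnz := ht.ne_zero_of_mul_neg
    have hsub : (a :: b :: t).map (fun x => decide (0 < x)) <+ signPattern l := by
      have hfilter : (a :: b :: t).filter (· ≠ 0) = a :: b :: t :=
        filter_eq_self.2 fun x hx => by simpa using hnz x hx
      have := htl.filter (· ≠ 0)
      rw [hfilter] at this
      exact this.map _
    have hl : signPattern l ≠ [] := fun h => by simp [h] at hsub
    rw [← length_destutter_signPattern hl, ← length_map (f := fun x => decide (0 < x))]
    exact ((isChain_mul_neg_iff hnz).1 ht).length_le_length_destutter_ne hsub

theorem exists_alternating_sublist {l : List ℝ} (hl : signPattern l ≠ []) :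
    ∃ t, t <+ l.filter (· ≠ 0) ∧ t.IsChain (fun x y => x * y < 0) ∧ t.length = signVar l + 1 := by
  obtain ⟨t, ht, hD⟩ := sublist_map_iff.1 ((signPattern l).destutter_sublist (· ≠ ·))
  have hnz : ∀ x ∈ t, x ≠ 0 := fun x hx => by simpa using (mem_filter.1 (ht.subset hx)).2
  refine ⟨t, ht, (isChain_mul_neg_iff hnz).2 ?_, ?_⟩
  · rw [← hD]; exact isChain_destutter _ _
  · rw [← length_destutter_signPattern hl, hD, length_map]

theorem exists_alternating_indices (f : ℕ → ℝ) {n : ℕ} (hf : ∃ i < n, f i ≠ 0) :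
    ∃ is, is <+ range n ∧ (∀ i ∈ is, f i ≠ 0) ∧ (is.map f).IsChain (fun x y => x * y < 0) ∧
      is.length = signVar ((range n).map f) + 1 := by
  have hl : signPattern ((range n).map f) ≠ [] := by
    simpa [signPattern, filter_eq_nil_iff] using hf
  obtain ⟨t, ht, halt, hlen⟩ := exists_alternating_sublist hl
  rw [filter_map] at ht
  obtain ⟨is, his, rfl⟩ := sublist_map_iff.1 ht
  exact ⟨is, his.trans filter_sublist,
    fun i hi => by simpa using (mem_filter.1 (his.subset hi)).2, halt, by simpa using hlen⟩

theorem even_signVar_map_range_iff {f : ℕ → ℝ} {n : ℕ} (h0 : f 0 ≠ 0) (hn : f n ≠ 0) :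
    Even (signVar ((range (n + 1)).map f)) ↔ (0 < f 0 ↔ 0 < f n) := by
  have hhead : (signPattern ((range (n + 1)).map f)).head? = some (decide (0 < f 0)) := by
    rw [range_succ_eq_map]; simp [signPattern, h0]
  have hlast : (signPattern ((range (n + 1)).map f)).getLast? = some (decide (0 < f n)) := by
    rw [range_succ]; simp [signPattern, hn]
  rw [signVar_eq_changes_signPattern, even_changes_iff_head?_eq_getLast?, hhead, hlast]
  simp

theorem sum_range_pow_mul_coeff_X_sub_C_mul {R : Type*} [CommRing R] (p : R[X]) (a : R) (q : ℕ) :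
    ∑ k ∈ Finset.range (q + 1), a ^ k * ((X - C a) * p).coeff k = -(a ^ (q + 1) * p.coeff q) := by
  induction q with
  | zero => simp [mul_coeff_zero]
  | succ q ih => rw [Finset.sum_range_succ, ih, coeff_X_sub_C_mul]; ring

section Interlacing

variable {R : Type*} [CommRing R] [LinearOrder R] [IsStrictOrderedRing R]

theorem exists_mul_pos_of_sum_mul_pos {ι : Type*} {s : Finset ι} {w c : ι → R} {x : R}
    (hw : ∀ i ∈ s, 0 < w i) (hs : 0 < (∑ i ∈ s, w i * c i) * x) : ∃ i ∈ s, 0 < c i * x := by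
  rw [Finset.sum_mul, ← Finset.sum_const_zero] at hs
  obtain ⟨i, hi, hpos⟩ := Finset.exists_lt_of_sum_lt hs
  exact ⟨i, hi, (mul_pos_iff_of_pos_left (hw i hi)).1 (by rwa [← mul_assoc])⟩

variable {a : R} {h : R[X]}

theorem exists_le_coeff_X_sub_C_mul_mul_neg (ha : 0 < a) {p : ℕ} (hp : h.coeff p ≠ 0) :
    ∃ j ≤ p, ((X - C a) * h).coeff j * h.coeff p < 0 := by
  have hs : 0 < (∑ k ∈ Finset.range (p + 1), a ^ k * ((X - C a) * h).coeff k) * -h.coeff p := by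
    rw [sum_range_pow_mul_coeff_X_sub_C_mul]
    have := pow_pos ha (p + 1)
    have := mul_self_pos.2 hp
    nlinarith
  obtain ⟨j, hj, hpos⟩ := exists_mul_pos_of_sum_mul_pos (fun k _ => pow_pos ha k) hs
  exact ⟨j, Nat.lt_succ_iff.1 (Finset.mem_range.1 hj), by linarith⟩

theorem exists_mem_Ioc_coeff_X_sub_C_mul_mul_pos (ha : 0 < a) {p q : ℕ} (hpq : p < q)
    (hp : h.coeff p ≠ 0) (hq : h.coeff p * h.coeff q ≤ 0) :
    ∃ j, p < j ∧ j ≤ q ∧ 0 < ((X - C a) * h).coeff j * h.coeff p := by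
  have hs : 0 < (∑ k ∈ Finset.Ico (p + 1) (q + 1), a ^ k * ((X - C a) * h).coeff k) * h.coeff p := by
    rw [Finset.sum_Ico_eq_sub _ (by omega), sum_range_pow_mul_coeff_X_sub_C_mul,
      sum_range_pow_mul_coeff_X_sub_C_mul]
    have := pow_pos ha (p + 1)
    have := pow_pos ha (q + 1)
    have := mul_self_pos.2 hp
    nlinarith
  obtain ⟨j, hj, hpos⟩ := exists_mul_pos_of_sum_mul_pos (fun k _ => pow_pos ha k) hs
  have := Finset.mem_Ico.1 hj
  exact ⟨j, by omega, by omega, hpos⟩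

theorem exists_interlacing_indices (ha : 0 < a) {m : ℕ} (hdeg : h.natDegree ≤ m) :
    ∀ (ps : List ℕ) (p : ℕ), (p :: ps).IsChain (· < ·) → (∀ i ∈ p :: ps, i ≤ m) →
      ((p :: ps).map h.coeff).IsChain (fun x y => x * y < 0) → h.coeff p ≠ 0 →
      ∃ q qs, p < q ∧ (q :: qs).IsChain (· < ·) ∧ (∀ j ∈ q :: qs, j ≤ m + 1) ∧
        qs.length = ps.length ∧
        ((q :: qs).map ((X - C a) * h).coeff).IsChain (fun x y => x * y < 0) ∧
        0 < ((X - C a) * h).coeff q * h.coeff p := by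
  intro ps
  induction ps with
  | nil =>
    intro p _ hbd _ hp
    have hpm := hbd p mem_cons_self
    obtain ⟨j, hpj, hjm, hj⟩ := exists_mem_Ioc_coeff_X_sub_C_mul_mul_pos ha (q := m + 1)
      (by omega) hp (by simp [coeff_eq_zero_of_natDegree_lt (show h.natDegree < m + 1 by omega)])
    exact ⟨j, [], hpj, isChain_singleton j, by simpa using hjm, rfl, isChain_singleton _, hj⟩
  | cons p' ps ih =>
    intro p hch hbd halt hp
    rw [isChain_cons_cons] at hch
    rw [map_cons, map_cons, isChain_cons_cons] at halt
    obtain ⟨q, qs, hpq, hqch, hqbd, hlen, hqalt, hq⟩ :=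
      ih p' hch.2 (fun i hi => hbd i (mem_cons_of_mem p hi)) halt.2
        (right_ne_zero_of_mul halt.1.ne)
    obtain ⟨j, hpj, hjp, hj⟩ := exists_mem_Ioc_coeff_X_sub_C_mul_mul_pos ha hch.1 hp halt.1.le
    refine ⟨j, q :: qs, hpj, isChain_cons_cons.2 ⟨by omega, hqch⟩, ?_, by simp [hlen],
      isChain_cons_cons.2 ⟨?_, hqalt⟩, hj⟩
    · intro i hi
      rcases mem_cons.1 hi with rfl | hi
      · have := hbd p' (by simp); omega
      · exact hqbd i hi
    · have := halt.1
      nlinarith [mul_pos hj hq]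

end Interlacing

theorem signVar_coeff_add_one_le_signVar_coeff_X_sub_C_mul {a : ℝ} (ha : 0 < a) {h : ℝ[X]}
    (hh : h ≠ 0) {m : ℕ} (hdeg : h.natDegree ≤ m) :
    signVar ((range (m + 1)).map h.coeff) + 1 ≤
      signVar ((range (m + 2)).map ((X - C a) * h).coeff) := by
  obtain ⟨_ | ⟨p, ps⟩, hsub, hnz, halt, hlen⟩ := exists_alternating_indices h.coeff (n := m + 1)
    ⟨h.natDegree, by omega, leadingCoeff_ne_zero.2 hh⟩
  · simp at hlen
  obtain ⟨hsorted, hbd⟩ := sublist_range_iff.1 hsub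
  obtain ⟨q, qs, hpq, hqch, hqbd, hqlen, hqalt, hq⟩ := exists_interlacing_indices ha hdeg ps p
    (isChain_iff_pairwise.2 hsorted) (fun i hi => Nat.lt_succ_iff.1 (hbd i hi)) halt
    (hnz p mem_cons_self)
  obtain ⟨j, hjp, hj⟩ := exists_le_coeff_X_sub_C_mul_mul_neg ha (hnz p mem_cons_self)
  have hjqs : (j :: q :: qs).IsChain (· < ·) := isChain_cons_cons.2 ⟨by omega, hqch⟩
  have hsub' : j :: q :: qs <+ range (m + 2) := by
    refine sublist_range_iff.2 ⟨isChain_iff_pairwise.1 hjqs, fun i hi => ?_⟩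
    rcases mem_cons.1 hi with rfl | hi
    · have := hbd _ mem_cons_self; omega
    · have := hqbd i hi; omega
  have halt' : ((j :: q :: qs).map ((X - C a) * h).coeff).IsChain (fun x y => x * y < 0) := by
    rw [map_cons, map_cons, isChain_cons_cons]
    exact ⟨by nlinarith [mul_neg_of_neg_of_pos hj hq, sq_nonneg (h.coeff p)], by simpa using hqalt⟩
  have := length_le_signVar_add_one (hsub'.map ((X - C a) * h).coeff) halt'
  simp only [length_map, length_cons] at this hlen
  omega

theorem even_signVar_coeff_X_sub_C_mul_iff {a : ℝ} (ha : 0 < a) {h : ℝ[X]} (hh : h ≠ 0)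
    {m : ℕ} (hdeg : h.natDegree = m) (h0 : h.coeff 0 ≠ 0) :
    Even (signVar ((range (m + 2)).map ((X - C a) * h).coeff)) ↔
      ¬Even (signVar ((range (m + 1)).map h.coeff)) := by
  have hm : h.coeff m ≠ 0 := by rw [← hdeg]; exact leadingCoeff_ne_zero.2 hh
  have hc0 : ((X - C a) * h).coeff 0 = -(a * h.coeff 0) := by simp [mul_coeff_zero]
  have htop : ((X - C a) * h).coeff (m + 1) = h.coeff m := by
    rw [coeff_X_sub_C_mul, coeff_eq_zero_of_natDegree_lt (n := m + 1) (by omega), mul_zero,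
      sub_zero]
  have hneg : 0 < -(a * h.coeff 0) ↔ ¬0 < h.coeff 0 := by
    rw [← mul_neg, mul_pos_iff_of_pos_left ha, neg_pos, not_lt, h0.le_iff_lt]
  rw [even_signVar_map_range_iff (by rwa [hc0, neg_ne_zero, mul_ne_zero_iff_left ha.ne'])
    (by rwa [htop]), even_signVar_map_range_iff h0 hm, hc0, htop, hneg]
  tauto

theorem gauss_lemma_for_descartes (m : ℕ) (h : Polynomial ℝ) (hne : h ≠ 0)
    (hdeg : h.natDegree = m) (h0 : h.eval 0 ≠ 0) (lam : ℝ) (hlam : 0 < lam)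
    (l : Polynomial ℝ) (hl : l = (Polynomial.X - Polynomial.C lam) * h) :
    ∃ ν : ℕ, Even ν ∧
      signVar ((List.range (m + 2)).map l.coeff)
        = signVar ((List.range (m + 1)).map h.coeff) + 1 + ν := by
  subst hl
  have hle := signVar_coeff_add_one_le_signVar_coeff_X_sub_C_mul hlam hne hdeg.le
  have hpar := even_signVar_coeff_X_sub_C_mul_iff hlam hne hdeg (by rwa [coeff_zero_eq_eval_zero])
  refine ⟨_, ?_, (Nat.add_sub_of_le hle).symm⟩
  rw [Nat.even_sub hle, Nat.even_add_one]
  tauto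
end
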